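/- arXiv:2402.01572 — 4 statements merged into one kernel-verified Lean document; each statement's English description precedes it below -/
import Mathlib

section
/- Let (X,Σ,m) be a σ-finite measure space and P a stochastic operator on L¹ = L¹(X,Σ,m). The discrete-time semigroup of iterates of P is asymptotically stable (there exists a density f* with lim_{n→∞} ‖Pⁿf − f*‖₁ = 0 for every density f) if and only if P has a lower function, i.e. there exists h ∈ L¹ with h ≥ 0, h ≠ 0, and lim_{n→∞} ‖(Pⁿf − h)⁻‖₁ = 0 for every density f, where g⁻ denotes the negative part max(0,−g). -/
open MeasureTheory Filter

/-- A stochastic (Markov) operator on `L¹(X,Σ,m)`. -/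
def IsStochasticOperator {X : Type*} [MeasurableSpace X] (m : Measure X)
    (P : Lp ℝ 1 m →L[ℝ] Lp ℝ 1 m) : Prop :=
  (∀ f : Lp ℝ 1 m, 0 ≤ f → 0 ≤ P f) ∧
  (∀ f : Lp ℝ 1 m, ∫ x, (P f : X → ℝ) x ∂m = ∫ x, (f : X → ℝ) x ∂m)

/-- A density: a nonnegative element of `L¹` of norm one. -/
def IsDensity {X : Type*} [MeasurableSpace X] (m : Measure X) (f : Lp ℝ 1 m) : Prop :=
  0 ≤ f ∧ ‖f‖ = 1

/-!
Call `h ≥ 0` a lower function when `‖(Pⁿf - h)⁻‖₁ → 0` for every density `f`, now allowing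
`h = 0`. Lower functions are closed under `⊔`, under `L¹`-limits and under `P`, and their norms
are at most `1`. The partial suprema of lower functions whose norms approach the supremum of all
such norms increase and have bounded integrals, so they converge in `L¹` to a lower function `h`
of maximal norm. Maximality applied to `h ⊔ P h` gives `P h ≤ h`, and as `P` preserves
integrals, `P h = h`. For a density `f`, writing `Pᴺf = h + (Pᴺf - h)⁺ - (Pᴺf - h)⁻` and using
that `(Pᴺf - h)⁺` has mass at least `1 - ‖h‖` shows that `(2 - ‖h‖) • h` is again a lower
function, so maximality forces `‖h‖ = 1`. Then `Pⁿf - h` has integral `0`, hence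
`‖Pⁿf - h‖₁ = 2 ‖(Pⁿf - h)⁻‖₁ → 0`.
-/

open Topology

section LatticeOrderedGroup

variable {α : Type*} [Lattice α] [AddCommGroup α]

lemma negPart_smul_le {𝕜 : Type*} [Semiring 𝕜] [PartialOrder 𝕜] [Module 𝕜 α] [PosSMulMono 𝕜 α]
    {c : 𝕜} (hc : 0 ≤ c) (a : α) : (c • a)⁻ ≤ c • a⁻ :=
  sup_le (by simpa only [smul_neg] using smul_le_smul_of_nonneg_left (neg_le_negPart a) hc)
    (smul_nonneg hc (negPart_nonneg a))

variable [IsOrderedAddMonoid α]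

lemma negPart_sub_sup_le (g a b : α) : (g - a ⊔ b)⁻ ≤ (g - a)⁻ + (g - b)⁻ := by
  have ha : a - g ≤ (g - a)⁻ := by simpa using neg_le_negPart (g - a)
  have hb : b - g ≤ (g - b)⁻ := by simpa using neg_le_negPart (g - b)
  refine sup_le ?_ (add_nonneg (negPart_nonneg _) (negPart_nonneg _))
  rw [neg_sub, sup_sub]
  exact sup_le (ha.trans (le_add_of_nonneg_right (negPart_nonneg _)))
    (hb.trans (le_add_of_nonneg_left (negPart_nonneg _)))

lemma negPart_add_sub_le (a : α) {b c : α} (hb : 0 ≤ b) (hc : 0 ≤ c) :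
    (a + b - c)⁻ ≤ a⁻ + c := by
  refine sup_le ?_ (add_nonneg (negPart_nonneg _) hc)
  calc -(a + b - c) = -a - b + c := by abel
    _ ≤ a⁻ + c := add_le_add_left ((sub_le_self _ hb).trans (neg_le_negPart a)) _

end LatticeOrderedGroup

section SolidNorm

variable {α : Type*} [NormedAddCommGroup α] [Lattice α] [HasSolidNorm α] [IsOrderedAddMonoid α]

lemma norm_le_norm_of_nonneg_of_le {a b : α} (ha : 0 ≤ a) (hab : a ≤ b) : ‖a‖ ≤ ‖b‖ :=
  norm_le_norm_of_abs_le_abs <| by rwa [abs_of_nonneg ha, abs_of_nonneg (ha.trans hab)]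

lemma norm_negPart_sub_negPart_le (a b : α) : ‖a⁻ - b⁻‖ ≤ ‖a - b‖ := by
  simpa [dist_eq_norm] using lipschitzWith_negPart.dist_le_mul a b

lemma norm_negPart_le (a : α) : ‖a⁻‖ ≤ ‖a‖ := by
  simpa using norm_negPart_sub_negPart_le a 0

end SolidNorm

namespace MeasureTheory

variable {α : Type*} [MeasurableSpace α] {μ : Measure α}

instance Lp.instPosSMulMono {p : ENNReal} : PosSMulMono ℝ (Lp ℝ p μ) where
  smul_le_smul_of_nonneg_left c hc f g hfg := by
    rw [← Lp.coeFn_le] at hfg ⊢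
    filter_upwards [hfg, Lp.coeFn_smul c f, Lp.coeFn_smul c g] with x hx hcf hcg
    rw [hcf, hcg]
    exact smul_le_smul_of_nonneg_left hx hc

namespace L1

lemma norm_eq_integral_of_nonneg {f : α →₁[μ] ℝ} (hf : 0 ≤ f) : ‖f‖ = integral f := by
  rw [norm_eq_integral_norm, integral_eq_integral]
  refine integral_congr_ae ?_
  filter_upwards [(Lp.coeFn_nonneg f).mpr hf] with x hx
  exact Real.norm_of_nonneg hx

lemma norm_sub_eq_integral_sub_of_le {f g : α →₁[μ] ℝ} (hfg : f ≤ g) :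
    ‖g - f‖ = integral g - integral f := by
  rw [norm_eq_integral_of_nonneg (sub_nonneg.2 hfg), integral_sub]

lemma integral_mono {f g : α →₁[μ] ℝ} (hfg : f ≤ g) : integral f ≤ integral g :=
  sub_nonneg.1 (norm_sub_eq_integral_sub_of_le hfg ▸ norm_nonneg _)

lemma eq_of_le_of_integral_le {f g : α →₁[μ] ℝ} (hfg : f ≤ g) (h : integral g ≤ integral f) :
    f = g := by
  refine (sub_eq_zero.1 (norm_eq_zero.1 ?_)).symm
  linarith [norm_sub_eq_integral_sub_of_le hfg, norm_nonneg (g - f)]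

lemma norm_eq_integral_add_two_mul_norm_negPart (f : α →₁[μ] ℝ) :
    ‖f‖ = integral f + 2 * ‖f⁻‖ := by
  have hf : |f| = f + (f⁻ + f⁻) :=
    calc |f| = f⁺ - f⁻ + (f⁻ + f⁻) := by rw [← posPart_add_negPart]; abel
      _ = f + (f⁻ + f⁻) := by rw [posPart_sub_negPart]
  rw [← norm_abs_eq_norm, norm_eq_integral_of_nonneg (abs_nonneg f), hf, integral_add,
    integral_add, norm_eq_integral_of_nonneg (negPart_nonneg f)]
  ring

lemma cauchySeq_of_monotone_of_bddAbove_integral {H : ℕ → α →₁[μ] ℝ} (hH : Monotone H)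
    (hbdd : BddAbove (Set.range fun n => integral (H n))) : CauchySeq H := by
  have hdist : ∀ a b, dist (H a) (H b) = dist (integral (H a)) (integral (H b)) := by
    intro a b
    wlog hab : a ≤ b generalizing a b
    · rw [dist_comm, this b a (le_of_not_ge hab), dist_comm]
    rw [dist_comm, dist_eq_norm, norm_sub_eq_integral_sub_of_le (hH hab), Real.dist_eq,
      abs_sub_comm, abs_of_nonneg (sub_nonneg.2 (integral_mono (hH hab)))]
  have hconv := (tendsto_atTop_ciSup (fun a b hab => integral_mono (hH hab)) hbdd).cauchySeq
  rw [Metric.cauchySeq_iff] at hconv ⊢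
  simpa only [hdist] using hconv

end L1

end MeasureTheory

section StochasticOperator

variable {X : Type*} [MeasurableSpace X] {m : Measure X} {P : Lp ℝ 1 m →L[ℝ] Lp ℝ 1 m}

namespace IsStochasticOperator

lemma integral_apply (hP : IsStochasticOperator m P) (f : Lp ℝ 1 m) :
    L1.integral (P f) = L1.integral f := by
  simpa only [L1.integral_eq_integral] using hP.2 f

lemma norm_apply_of_nonneg (hP : IsStochasticOperator m P) {f : Lp ℝ 1 m} (hf : 0 ≤ f) :
    ‖P f‖ = ‖f‖ := by
  rw [L1.norm_eq_integral_of_nonneg (hP.1 f hf), L1.norm_eq_integral_of_nonneg hf,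
    hP.integral_apply]

protected lemma pow (hP : IsStochasticOperator m P) (n : ℕ) :
    IsStochasticOperator m (P ^ n) := by
  induction n with
  | zero => exact ⟨fun f hf => by simpa using hf, fun f => by simp⟩
  | succ n ih =>
    rw [pow_succ]
    exact ⟨fun f hf => ih.1 _ (hP.1 f hf), fun f => (ih.2 (P f)).trans (hP.2 f)⟩

lemma negPart_apply_le (hP : IsStochasticOperator m P) (g : Lp ℝ 1 m) : (P g)⁻ ≤ P g⁻ := by
  refine sup_le ?_ (hP.1 _ (negPart_nonneg g))
  calc -P g = P g⁻ - P g⁺ := by rw [← posPart_sub_negPart g, map_sub, posPart_sub_negPart]; abel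
    _ ≤ P g⁻ := sub_le_self _ (hP.1 _ (posPart_nonneg g))

lemma norm_negPart_apply_le (hP : IsStochasticOperator m P) (g : Lp ℝ 1 m) :
    ‖(P g)⁻‖ ≤ ‖g⁻‖ :=
  (norm_le_norm_of_nonneg_of_le (negPart_nonneg _) (hP.negPart_apply_le g)).trans_eq
    (hP.norm_apply_of_nonneg (negPart_nonneg g))

end IsStochasticOperator

lemma isDensity_inv_norm_smul {f : Lp ℝ 1 m} (hf : 0 ≤ f) (hf₀ : f ≠ 0) :
    IsDensity m (‖f‖⁻¹ • f) :=
  ⟨smul_nonneg (inv_nonneg.2 (norm_nonneg f)) hf, norm_smul_inv_norm hf₀⟩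

namespace IsDensity

lemma integral_eq_one {f : Lp ℝ 1 m} (hf : IsDensity m f) : L1.integral f = 1 := by
  rw [← L1.norm_eq_integral_of_nonneg hf.1, hf.2]

lemma pow_apply (hP : IsStochasticOperator m P) {f : Lp ℝ 1 m} (hf : IsDensity m f) (n : ℕ) :
    IsDensity m ((P ^ n) f) :=
  ⟨(hP.pow n).1 f hf.1, ((hP.pow n).norm_apply_of_nonneg hf.1).trans hf.2⟩

end IsDensity

lemma IsStochasticOperator.norm_negPart_pow_apply_sub_le (hP : IsStochasticOperator m P)
    {h : Lp ℝ 1 m} (hh : 0 ≤ h) (hfix : P h = h) {g : Lp ℝ 1 m} (hg : IsDensity m g) (k : ℕ) :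
    ‖((P ^ k) g - (2 - ‖h‖) • h)⁻‖ ≤ ‖((P ^ k) (g - h)⁺ - ‖(g - h)⁺‖ • h)⁻‖ + ‖(g - h)⁻‖ := by
  set p := (g - h)⁺
  set q := (g - h)⁻
  have hq : 0 ≤ q := negPart_nonneg _
  have hpq : p = g - h + q := eq_add_of_sub_eq (posPart_sub_negPart _)
  have hnorm_p : ‖p‖ = 1 - ‖h‖ + ‖q‖ := by
    rw [L1.norm_eq_integral_of_nonneg (posPart_nonneg _), L1.norm_eq_integral_of_nonneg hh,
      L1.norm_eq_integral_of_nonneg hq, ← hg.integral_eq_one, ← L1.integral_sub,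
      ← L1.integral_add, ← hpq]
  have hpow_g : (P ^ k) g = h + (P ^ k) p - (P ^ k) q := by
    have hfix_k : (P ^ k) h = h := by
      rw [FunLike.coe_pow_eq_iterate]; exact Function.iterate_fixed hfix k
    rw [← hfix_k, ← map_add, ← map_sub, add_sub_assoc, posPart_sub_negPart, add_sub_cancel]
  have hsplit : (P ^ k) g - (2 - ‖h‖) • h = ((P ^ k) p - ‖p‖ • h) + ‖q‖ • h - (P ^ k) q := by
    rw [hpow_g, hnorm_p]; module
  calc ‖((P ^ k) g - (2 - ‖h‖) • h)⁻‖ ≤ ‖((P ^ k) p - ‖p‖ • h)⁻ + (P ^ k) q‖ := by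
        rw [hsplit]
        exact norm_le_norm_of_nonneg_of_le (negPart_nonneg _) (negPart_add_sub_le _
          (smul_nonneg (norm_nonneg q) hh) ((hP.pow k).1 q hq))
    _ ≤ ‖((P ^ k) p - ‖p‖ • h)⁻‖ + ‖q‖ := by
        grw [norm_add_le, (hP.pow k).norm_apply_of_nonneg hq]

/-- Unlike in the theorem, the zero function counts as a lower function. -/
def IsLowerFunction (m : Measure X) (P : Lp ℝ 1 m →L[ℝ] Lp ℝ 1 m) (h : Lp ℝ 1 m) : Prop :=
  0 ≤ h ∧ ∀ f : Lp ℝ 1 m, IsDensity m f →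
    Tendsto (fun n : ℕ => ‖((P ^ n) f - h)⁻‖) atTop (𝓝 0)

namespace IsLowerFunction

variable {h : Lp ℝ 1 m}

lemma zero (hP : IsStochasticOperator m P) : IsLowerFunction m P 0 :=
  ⟨le_rfl, fun f hf => by
    simp only [sub_zero, negPart_eq_zero.2 ((hP.pow _).1 f hf.1), norm_zero, tendsto_const_nhds]⟩

lemma norm_le_one (hP : IsStochasticOperator m P) (hh : IsLowerFunction m P h) : ‖h‖ ≤ 1 := by
  rcases eq_or_ne h 0 with rfl | hh₀
  · simp
  have hf := isDensity_inv_norm_smul hh.1 hh₀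
  refine le_of_forall_pos_le_add fun ε hε => ?_
  obtain ⟨n, hn⟩ := ((hh.2 _ hf).eventually (gt_mem_nhds hε)).exists
  have hle : h - (P ^ n) (‖h‖⁻¹ • h) ≤ ((P ^ n) (‖h‖⁻¹ • h) - h)⁻ := by
    simpa using neg_le_negPart ((P ^ n) (‖h‖⁻¹ • h) - h)
  have := L1.integral_mono hle
  rw [L1.integral_sub, (hf.pow_apply hP n).integral_eq_one,
    ← L1.norm_eq_integral_of_nonneg hh.1, ← L1.norm_eq_integral_of_nonneg (negPart_nonneg _)]
    at this
  linarith

lemma sup {h₁ h₂ : Lp ℝ 1 m} (hh₁ : IsLowerFunction m P h₁) (hh₂ : IsLowerFunction m P h₂) :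
    IsLowerFunction m P (h₁ ⊔ h₂) := by
  refine ⟨hh₁.1.trans le_sup_left, fun f hf => ?_⟩
  refine squeeze_zero (fun n => norm_nonneg _) (fun n => ?_)
    (by simpa only [add_zero] using (hh₁.2 f hf).add (hh₂.2 f hf))
  exact (norm_le_norm_of_nonneg_of_le (negPart_nonneg _) (negPart_sub_sup_le _ _ _)).trans
    (norm_add_le _ _)

lemma partialSups {H : ℕ → Lp ℝ 1 m} (hH : ∀ n, IsLowerFunction m P (H n)) (n : ℕ) :
    IsLowerFunction m P (partialSups H n) := by
  rw [partialSups_apply]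
  exact Finset.sup'_induction _ _ (fun _ h₁ _ h₂ => h₁.sup h₂) fun k _ => hH k

lemma of_tendsto {H : ℕ → Lp ℝ 1 m} (hH : ∀ n, IsLowerFunction m P (H n))
    (hlim : Tendsto H atTop (𝓝 h)) : IsLowerFunction m P h := by
  refine ⟨isClosed_nonneg.mem_of_tendsto hlim (Eventually.of_forall fun n => (hH n).1),
    fun f hf => ?_⟩
  simp only [Metric.tendsto_nhds, dist_zero_right, norm_norm]
  intro ε hε
  obtain ⟨k, hk⟩ := ((tendsto_iff_norm_sub_tendsto_zero.1 hlim).eventually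
    (gt_mem_nhds (half_pos hε))).exists
  filter_upwards [(hH k).2 f hf |>.eventually (gt_mem_nhds (half_pos hε))] with n hn
  calc ‖((P ^ n) f - h)⁻‖
      ≤ ‖((P ^ n) f - H k)⁻‖ + ‖((P ^ n) f - h)⁻ - ((P ^ n) f - H k)⁻‖ :=
        norm_le_norm_add_norm_sub' _ _
    _ ≤ ‖((P ^ n) f - H k)⁻‖ + ‖H k - h‖ := by
        grw [norm_negPart_sub_negPart_le, sub_sub_sub_cancel_left]
    _ < ε / 2 + ε / 2 := add_lt_add hn hk
    _ = ε := add_halves ε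

lemma apply (hP : IsStochasticOperator m P) (hh : IsLowerFunction m P h) :
    IsLowerFunction m P (P h) := by
  refine ⟨hP.1 h hh.1, fun f hf => ?_⟩
  rw [← tendsto_add_atTop_iff_nat 1]
  refine squeeze_zero (fun n => norm_nonneg _) (fun n => ?_) (hh.2 f hf)
  rw [pow_succ', mul_apply_eq_comp, ← map_sub]
  exact hP.norm_negPart_apply_le _

lemma apply_eq_self_of_isMaxOn (hP : IsStochasticOperator m P) (hh : IsLowerFunction m P h)
    (hmax : IsMaxOn norm {g | IsLowerFunction m P g} h) : P h = h := by
  have hsup := hh.sup (hh.apply hP)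
  have hsup_eq : h ⊔ P h = h := by
    refine (L1.eq_of_le_of_integral_le le_sup_left ?_).symm
    rw [← L1.norm_eq_integral_of_nonneg hsup.1, ← L1.norm_eq_integral_of_nonneg hh.1]
    exact isMaxOn_iff.1 hmax _ hsup
  refine L1.eq_of_le_of_integral_le (sup_eq_left.1 hsup_eq) ?_
  rw [hP.integral_apply]

lemma tendsto_norm_negPart_pow_apply_sub_norm_smul (hh : IsLowerFunction m P h) {p : Lp ℝ 1 m}
    (hp : 0 ≤ p) :
    Tendsto (fun n : ℕ => ‖((P ^ n) p - ‖p‖ • h)⁻‖) atTop (𝓝 0) := by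
  rcases eq_or_ne p 0 with rfl | hp₀
  · simp only [map_zero, norm_zero, zero_smul, sub_zero, negPart_zero, tendsto_const_nhds]
  have hlim := (hh.2 _ (isDensity_inv_norm_smul hp hp₀)).const_mul ‖p‖
  rw [mul_zero] at hlim
  refine squeeze_zero (fun n => norm_nonneg _) (fun n => ?_) hlim
  have hsplit : (P ^ n) p - ‖p‖ • h = ‖p‖ • ((P ^ n) (‖p‖⁻¹ • p) - h) := by
    rw [smul_sub, ← map_smul, smul_inv_smul₀ (norm_ne_zero_iff.2 hp₀)]
  rw [hsplit, ← norm_smul_of_nonneg (norm_nonneg p)]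
  exact norm_le_norm_of_nonneg_of_le (negPart_nonneg _) (negPart_smul_le (norm_nonneg p) _)

lemma two_sub_norm_smul (hP : IsStochasticOperator m P) (hh : IsLowerFunction m P h)
    (hfix : P h = h) : IsLowerFunction m P ((2 - ‖h‖) • h) := by
  refine ⟨smul_nonneg (by linarith [hh.norm_le_one hP]) hh.1, fun f hf => ?_⟩
  simp only [Metric.tendsto_nhds, dist_zero_right, norm_norm]
  intro ε hε
  obtain ⟨N, hN⟩ := ((hh.2 f hf).eventually (gt_mem_nhds (half_pos hε))).exists
  have hlim := hh.tendsto_norm_negPart_pow_apply_sub_norm_smul (posPart_nonneg ((P ^ N) f - h))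
  filter_upwards [(tendsto_sub_atTop_nat N).eventually
    (hlim.eventually (gt_mem_nhds (half_pos hε))), eventually_ge_atTop N] with n hn hNn
  obtain ⟨k, rfl⟩ := Nat.exists_eq_add_of_le hNn
  rw [Nat.add_sub_cancel_left] at hn
  calc ‖((P ^ (N + k)) f - (2 - ‖h‖) • h)⁻‖
      ≤ ‖((P ^ k) ((P ^ N) f - h)⁺ - ‖((P ^ N) f - h)⁺‖ • h)⁻‖ + ‖((P ^ N) f - h)⁻‖ := by
        rw [add_comm, pow_add, mul_apply_eq_comp]
        exact hP.norm_negPart_pow_apply_sub_le hh.1 hfix (hf.pow_apply hP N) k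
    _ < ε / 2 + ε / 2 := add_lt_add hn hN
    _ = ε := add_halves ε

lemma norm_eq_one_of_isMaxOn (hP : IsStochasticOperator m P) (hh : IsLowerFunction m P h)
    (hmax : IsMaxOn norm {g | IsLowerFunction m P g} h) (hh₀ : h ≠ 0) : ‖h‖ = 1 := by
  have hscaled :=
    isMaxOn_iff.1 hmax _ (hh.two_sub_norm_smul hP (hh.apply_eq_self_of_isMaxOn hP hmax))
  rw [norm_smul, Real.norm_of_nonneg (by linarith [hh.norm_le_one hP])] at hscaled
  nlinarith [hh.norm_le_one hP, norm_pos_iff.2 hh₀]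

lemma tendsto_norm_pow_apply_sub (hP : IsStochasticOperator m P) (hh : IsLowerFunction m P h)
    (hh₁ : ‖h‖ = 1) {f : Lp ℝ 1 m} (hf : IsDensity m f) :
    Tendsto (fun n : ℕ => ‖(P ^ n) f - h‖) atTop (𝓝 0) := by
  have hnorm : ∀ n, ‖(P ^ n) f - h‖ = 2 * ‖((P ^ n) f - h)⁻‖ := fun n => by
    rw [L1.norm_eq_integral_add_two_mul_norm_negPart, L1.integral_sub,
      (hf.pow_apply hP n).integral_eq_one, ← L1.norm_eq_integral_of_nonneg hh.1, hh₁, sub_self,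
      zero_add]
  simpa only [hnorm, mul_zero] using (hh.2 f hf).const_mul 2

end IsLowerFunction

lemma exists_isLowerFunction_isMaxOn_norm (hP : IsStochasticOperator m P) :
    ∃ h, IsLowerFunction m P h ∧ IsMaxOn norm {g | IsLowerFunction m P g} h := by
  set S := norm '' {h | IsLowerFunction m P h}
  have hS : S.Nonempty := ⟨_, 0, IsLowerFunction.zero hP, rfl⟩
  have hbdd : BddAbove S := ⟨1, by rintro _ ⟨h, hh, rfl⟩; exact hh.norm_le_one hP⟩
  obtain ⟨r, -, hr, hrS⟩ := exists_seq_tendsto_sSup hS hbdd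
  choose g hg hgr using hrS
  have hH := IsLowerFunction.partialSups hg
  obtain ⟨h, hlim⟩ := cauchySeq_tendsto_of_complete <|
    L1.cauchySeq_of_monotone_of_bddAbove_integral (partialSups g).monotone ⟨1, by
      rintro _ ⟨n, rfl⟩
      exact (L1.norm_eq_integral_of_nonneg (hH n).1).symm.trans_le ((hH n).norm_le_one hP)⟩
  refine ⟨h, IsLowerFunction.of_tendsto hH hlim, isMaxOn_iff.2 fun g' hg' => ?_⟩
  refine (le_csSup hbdd ⟨g', hg', rfl⟩).trans
    (le_of_tendsto_of_tendsto' hr hlim.norm fun n => ?_)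
  rw [← hgr n]
  exact norm_le_norm_of_nonneg_of_le (hg n).1 (le_partialSups g n)

end StochasticOperator

theorem lower_function_theorem_discrete_general
    {X : Type*} [MeasurableSpace X] (m : Measure X)
    (P : Lp ℝ 1 m →L[ℝ] Lp ℝ 1 m) (hP : IsStochasticOperator m P) :
    (∃ fstar : Lp ℝ 1 m, IsDensity m fstar ∧
      ∀ f : Lp ℝ 1 m, IsDensity m f →
        Tendsto (fun n : ℕ => ‖(P ^ n) f - fstar‖) atTop (nhds 0)) ↔
    (∃ h : Lp ℝ 1 m, 0 ≤ h ∧ h ≠ 0 ∧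
      ∀ f : Lp ℝ 1 m, IsDensity m f →
        Tendsto (fun n : ℕ => ‖((P ^ n) f - h)⁻‖) atTop (nhds 0)) := by
  constructor
  · rintro ⟨fstar, hfstar, hconv⟩
    refine ⟨fstar, hfstar.1, fun h₀ => by simpa [h₀] using hfstar.2, fun f hf => ?_⟩
    exact squeeze_zero (fun n => norm_nonneg _) (fun n => norm_negPart_le _) (hconv f hf)
  · rintro ⟨h₀, h₀_nonneg, h₀_ne, h₀_lower⟩
    obtain ⟨h, hh, hmax⟩ := exists_isLowerFunction_isMaxOn_norm hP
    have hh₀ : h ≠ 0 := by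
      rintro rfl
      simpa [h₀_ne] using isMaxOn_iff.1 hmax h₀ ⟨h₀_nonneg, h₀_lower⟩
    have hh₁ := hh.norm_eq_one_of_isMaxOn hP hmax hh₀
    exact ⟨h, ⟨hh.1, hh₁⟩, fun f hf => hh.tendsto_norm_pow_apply_sub hP hh₁ hf⟩

/-- **The lower function theorem of Lasota and Yorke (discrete time).**
The semigroup of iterates of a stochastic operator `P` on `L¹(X,Σ,m)` of a σ-finite measure
space is asymptotically stable (i.e. there is a density `f*` with `‖Pⁿf − f*‖₁ → 0` for every
density `f`) if and only if `P` admits a lower function: an `h ∈ L¹`, `h ≥ 0`, `h ≠ 0`, such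
that `‖(Pⁿf − h)⁻‖₁ → 0` for every density `f`. -/
theorem lower_function_theorem_discrete
    {X : Type*} [MeasurableSpace X] (m : Measure X) [SigmaFinite m]
    (P : Lp ℝ 1 m →L[ℝ] Lp ℝ 1 m) (hP : IsStochasticOperator m P) :
    (∃ fstar : Lp ℝ 1 m, IsDensity m fstar ∧
      ∀ f : Lp ℝ 1 m, IsDensity m f →
        Tendsto (fun n : ℕ => ‖(P ^ n) f - fstar‖) atTop (nhds 0)) ↔
    (∃ h : Lp ℝ 1 m, 0 ≤ h ∧ h ≠ 0 ∧
      ∀ f : Lp ℝ 1 m, IsDensity m f →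
        Tendsto (fun n : ℕ => ‖((P ^ n) f - h)⁻‖) atTop (nhds 0)) :=
  lower_function_theorem_discrete_general m P hP
end

section
/- Let Q = [q_{ij}] be a real n×n matrix satisfying: (P) q_{ij} ≥ 0 for all i ≠ j, and (I) for all indices i and j there exists a sequence (i₁,…,i_m) with i₁ = i, i_m = j, and q_{i_k i_{k+1}} > 0 for k = 1,…,m−1. Then there exist r ∈ ℝ, vectors x*, y* ∈ ℝⁿ with all coordinates strictly positive, and constants C ≥ 0, ε > 0 such that ‖e^{−rt}·x e^{tQ} − ⟨y*, x⟩ x*‖ ≤ C e^{−εt} ‖x‖ for every x ∈ ℝⁿ and all t ≥ 0; in particular lim_{t→∞} e^{−rt} x e^{tQ} = x* ⟨y*, x⟩ for every x ∈ ℝⁿ, with exponential rate of convergence. -/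
/-!
Shifting `Q` by a multiple of the identity makes it entrywise nonnegative and only multiplies
`exp Q` by a positive scalar; by irreducibility some power of the shifted matrix is positive at
any given entry, so `A = exp Qᵀ` is a strictly positive matrix.

For a positive matrix the Collatz–Wielandt function attains its maximum on the simplex at a
positive eigenvector `v`, with eigenvalue `r`, and applying this to `Aᵀ` gives a positive left
eigenvector `w`. Doob's transform by `v` turns `A / r` into a stochastic matrix with entries
bounded below by some `ε > 0`, and such a matrix shrinks the oscillation of every vector by the
factor `1 - nε` (Doeblin). Hence `r⁻ᵏ Aᵏ x → ⟨w, x⟩ v` geometrically. In particular `r` is a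
simple eigenvalue; since `Qᵀ` commutes with `A`, `Qᵀ v` is again an eigenvector for `r`, so
`Qᵀ v = ρ v` with `r = e^ρ`, and the continuous-time estimate follows by writing `t = ⌊t⌋ + s`
with `s ∈ [0, 1)`.
-/

open Finset NormedSpace Filter Set
open scoped Nat

namespace Matrix

variable {ι : Type*} [Fintype ι]

section Exponential

variable [DecidableEq ι]

attribute [local instance] Matrix.linftyOpNormedRing Matrix.linftyOpNormedAlgebra in
theorem hasSum_exp_series (M : Matrix ι ι ℝ) :
    HasSum (fun k => (k ! : ℝ)⁻¹ • M ^ k) (exp M) :=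
  exp_series_hasSum_exp' M

theorem hasSum_exp_apply (M : Matrix ι ι ℝ) (i j : ι) :
    HasSum (fun k => (k ! : ℝ)⁻¹ * (M ^ k) i j) (exp M i j) :=
  Pi.hasSum.mp (Pi.hasSum.mp (hasSum_exp_series M) i) j

theorem exp_mulVec_of_mulVec_eq_smul {M : Matrix ι ι ℝ} {v : ι → ℝ} {ρ : ℝ}
    (hv : M *ᵥ v = ρ • v) : exp M *ᵥ v = Real.exp ρ • v := by
  have hpow : ∀ k : ℕ, M ^ k *ᵥ v = ρ ^ k • v := by
    intro k
    induction k with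
    | zero => simp
    | succ k ih => rw [pow_succ, ← mulVec_mulVec, hv, mulVec_smul, ih, smul_smul, pow_succ']
  refine ((hasSum_exp_series M).map (mulVec.addMonoidHomLeft v)
    (continuous_id.matrix_mulVec continuous_const)).unique ?_
  have he := (exp_series_hasSum_exp' (𝕂 := ℝ) ρ).smul_const v
  rw [← Real.exp_eq_exp_ℝ] at he
  convert he using 2 with k
  show ((k ! : ℝ)⁻¹ • M ^ k) *ᵥ v = _
  rw [smul_mulVec, hpow, smul_smul, smul_eq_mul]

attribute [local instance] Matrix.linftyOpNormedRing Matrix.linftyOpNormedAlgebra in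
theorem exists_bound_exp_smul_mulVec (M : Matrix ι ι ℝ) :
    ∃ K, 0 ≤ K ∧ ∀ s ∈ Icc (0 : ℝ) 1, ∀ x : ι → ℝ, ‖exp (s • M) *ᵥ x‖ ≤ K * ‖x‖ := by
  obtain ⟨K, hK⟩ := isCompact_Icc.exists_bound_of_continuousOn
    ((exp_continuous.comp (continuous_id.smul continuous_const)).continuousOn :
      ContinuousOn (fun s : ℝ => exp (s • M)) (Icc 0 1))
  exact ⟨K, (norm_nonneg _).trans (hK 0 ⟨le_rfl, zero_le_one⟩), fun s hs x =>
    (linfty_opNorm_mulVec _ x).trans (mul_le_mul_of_nonneg_right (hK s hs) (norm_nonneg x))⟩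

theorem exp_add_smul_one (M : Matrix ι ι ℝ) (a : ℝ) :
    exp (M + a • 1) = Real.exp a • exp M := by
  rw [exp_add_of_commute _ _ ((Commute.one_right M).smul_right a), smul_one_eq_diagonal,
    exp_diagonal, Pi.exp_def, ← smul_one_eq_diagonal, Matrix.mul_smul, mul_one,
    Real.exp_eq_exp_ℝ]

theorem pow_apply_pos_of_chain {R : Type*} [Semiring R] [PartialOrder R] [IsStrictOrderedRing R]
    {S : Matrix ι ι R} (hS : ∀ i j, 0 ≤ S i j) {k : ℕ} (c : Fin (k + 1) → ι)
    (hc : ∀ l : Fin k, 0 < S (c l.castSucc) (c l.succ)) :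
    0 < (S ^ k) (c 0) (c (Fin.last k)) := by
  induction k with
  | zero => simp
  | succ k ih =>
    rw [pow_succ', mul_apply]
    refine sum_pos' (fun l _ => mul_nonneg (hS _ _) (pow_apply_nonneg hS _ _ _))
      ⟨c 1, mem_univ _, mul_pos (hc 0) ?_⟩
    have := ih (fun l => c l.succ) fun l => by simpa only [← Fin.succ_castSucc] using hc l.succ
    rwa [Fin.succ_last] at this

theorem exp_apply_pos_of_pow_apply_pos {S : Matrix ι ι ℝ} (hS : ∀ i j, 0 ≤ S i j) {k : ℕ}
    {i j : ι} (hk : 0 < (S ^ k) i j) : 0 < exp S i j :=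
  (by positivity : 0 < (k ! : ℝ)⁻¹ * (S ^ k) i j).trans_le <|
    le_hasSum (hasSum_exp_apply S i j) k fun m _ =>
      mul_nonneg (by positivity) (pow_apply_nonneg hS m i j)

theorem exp_apply_pos {Q : Matrix ι ι ℝ} (hQ : ∀ i j, i ≠ j → 0 ≤ Q i j)
    (hI : ∀ i j, ∃ (k : ℕ) (c : Fin (k + 1) → ι),
      c 0 = i ∧ c (Fin.last k) = j ∧ ∀ l : Fin k, 0 < Q (c l.castSucc) (c l.succ))
    (i j : ι) : 0 < exp Q i j := by
  set a := ∑ i, |Q i i| + 1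
  have hdiag : ∀ i, 0 < Q i i + a := fun i => by
    linarith [single_le_sum (fun i _ => abs_nonneg (Q i i)) (mem_univ i), neg_abs_le (Q i i)]
  have hS : ∀ i j, (Q + a • 1) i j = if i = j then Q i i + a else Q i j := fun i j => by
    by_cases h : i = j <;> simp [h]
  have hSnn : ∀ i j, 0 ≤ (Q + a • 1) i j := fun i j => by
    rw [hS]; split_ifs with h; exacts [(hdiag i).le, hQ i j h]
  obtain ⟨k, c, rfl, rfl, hc⟩ := hI i j
  have hpos := exp_apply_pos_of_pow_apply_pos hSnn <| pow_apply_pos_of_chain hSnn c fun l => by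
    rw [hS]; split_ifs with h; exacts [hdiag _, hc l]
  rw [exp_add_smul_one, smul_apply, smul_eq_mul] at hpos
  exact pos_of_mul_pos_right hpos (Real.exp_pos a).le

end Exponential

section Doeblin

theorem sum_mul_mem_Icc {a c : ι → ℝ} (ha : ∀ j, 0 ≤ a j) {μ D : ℝ}
    (hc : ∀ j, c j ∈ Icc μ (μ + D)) :
    ∑ j, a j * c j ∈ Icc ((∑ j, a j) * μ) ((∑ j, a j) * (μ + D)) := by
  rw [sum_mul, sum_mul]
  exact ⟨sum_le_sum fun j _ => mul_le_mul_of_nonneg_left (hc j).1 (ha j),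
    sum_le_sum fun j _ => mul_le_mul_of_nonneg_left (hc j).2 (ha j)⟩

theorem exists_mulVec_mem_Icc {P : Matrix ι ι ℝ} {ε : ℝ} (hP : ∀ i j, ε ≤ P i j)
    (hrow : ∀ i, ∑ j, P i j = 1) {c : ι → ℝ} {μ D : ℝ} (hc : ∀ j, c j ∈ Icc μ (μ + D)) :
    ∃ μ', ∀ i, (P *ᵥ c) i ∈ Icc μ' (μ' + (1 - Fintype.card ι * ε) * D) := by
  refine ⟨ε * ∑ j, c j + (1 - Fintype.card ι * ε) * μ, fun i => ?_⟩
  -- split `P = ε + (P - ε)`: the first part averages `c`, the second is nonnegative with row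
  -- sums `1 - card ι * ε`
  have hsum : ∑ j, (P i j - ε) = 1 - Fintype.card ι * ε := by
    simp [sum_sub_distrib, hrow i]
  have hPc : (P *ᵥ c) i = ε * ∑ j, c j + ∑ j, (P i j - ε) * c j := by
    simp only [mulVec, dotProduct, sub_mul, sum_sub_distrib, mul_sum]
    ring
  have := sum_mul_mem_Icc (fun j => sub_nonneg.mpr (hP i j)) hc
  rw [hsum] at this
  rw [hPc]
  constructor <;> nlinarith [this.1, this.2]

variable [DecidableEq ι]

theorem exists_pow_mulVec_mem_Icc {P : Matrix ι ι ℝ} {ε : ℝ} (hP : ∀ i j, ε ≤ P i j)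
    (hrow : ∀ i, ∑ j, P i j = 1) {c : ι → ℝ} {μ D : ℝ} (hc : ∀ j, c j ∈ Icc μ (μ + D))
    (k : ℕ) : ∃ μ', ∀ i, (P ^ k *ᵥ c) i ∈ Icc μ' (μ' + (1 - Fintype.card ι * ε) ^ k * D) := by
  induction k with
  | zero => exact ⟨μ, by simpa using hc⟩
  | succ k ih =>
    obtain ⟨μ', hμ'⟩ := ih
    obtain ⟨μ'', hμ''⟩ := exists_mulVec_mem_Icc hP hrow hμ'
    exact ⟨μ'', by simpa [pow_succ', ← mulVec_mulVec, mul_assoc] using hμ''⟩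

theorem abs_pow_mulVec_sub_dotProduct_le {P : Matrix ι ι ℝ} {ε : ℝ} (hP : ∀ i j, ε ≤ P i j)
    (hrow : ∀ i, ∑ j, P i j = 1) {q : ι → ℝ} (hq : ∀ j, 0 ≤ q j) (hq1 : ∑ j, q j = 1)
    (hqP : q ᵥ* P = q) {c : ι → ℝ} {μ D : ℝ} (hc : ∀ j, c j ∈ Icc μ (μ + D)) (k : ℕ) (i : ι) :
    |(P ^ k *ᵥ c) i - q ⬝ᵥ c| ≤ (1 - Fintype.card ι * ε) ^ k * D := by
  have hqPk : q ᵥ* P ^ k = q := by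
    induction k with
    | zero => simp
    | succ k ih => rw [pow_succ, ← vecMul_vecMul, ih, hqP]
  obtain ⟨μ', hμ'⟩ := exists_pow_mulVec_mem_Icc hP hrow hc k
  -- `q ⬝ᵥ c = q ⬝ᵥ (P ^ k *ᵥ c)` is an average of the entries of `P ^ k *ᵥ c`
  have hmean := sum_mul_mem_Icc hq hμ'
  rw [hq1, one_mul, one_mul, ← dotProduct, dotProduct_mulVec, hqPk] at hmean
  rw [abs_sub_le_iff]
  constructor <;> linarith [(hμ' i).1, (hμ' i).2, hmean.1, hmean.2]

theorem exists_abs_pow_mulVec_sub_dotProduct_le [Nonempty ι] {P : Matrix ι ι ℝ}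
    (hP : ∀ i j, 0 < P i j) (hrow : ∀ i, ∑ j, P i j = 1) {q : ι → ℝ} (hq : ∀ j, 0 ≤ q j)
    (hq1 : ∑ j, q j = 1) (hqP : q ᵥ* P = q) :
    ∃ θ, 0 < θ ∧ θ < 1 ∧ ∀ c k i, |(P ^ k *ᵥ c) i - q ⬝ᵥ c| ≤ θ ^ k * (2 * ‖c‖) := by
  obtain ⟨⟨i₀, j₀⟩, hmin⟩ := Finite.exists_min fun p : ι × ι => P p.1 p.2
  have hcard : (0 : ℝ) < Fintype.card ι := by exact_mod_cast Fintype.card_pos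
  have hsmall : Fintype.card ι * P i₀ j₀ ≤ 1 := by
    simpa [hrow i₀] using sum_le_sum fun j (_ : j ∈ Finset.univ) => hmin (i₀, j)
  -- half the smallest entry, so that the contraction factor stays positive
  refine ⟨1 - Fintype.card ι * (P i₀ j₀ / 2), by linarith, by nlinarith [hP i₀ j₀],
    fun c k i => abs_pow_mulVec_sub_dotProduct_le (fun i j => ?_) hrow hq hq1 hqP
      (μ := -‖c‖) (fun j => ?_) k i⟩
  · linarith [hmin (i, j), hP i₀ j₀]
  · have := abs_le.mp ((Real.norm_eq_abs _).symm.trans_le (norm_le_pi_norm c j))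
    constructor <;> linarith [this.1, this.2]

end Doeblin

section Perron

theorem mulVec_pos_of_pos {A : Matrix ι ι ℝ} (hA : ∀ i j, 0 < A i j) {x : ι → ℝ}
    (hx : ∀ j, 0 ≤ x j) (hx' : ∃ j, 0 < x j) (i : ι) : 0 < (A *ᵥ x) i := by
  obtain ⟨j, hj⟩ := hx'
  exact sum_pos' (fun l _ => mul_nonneg (hA i l).le (hx l)) ⟨j, mem_univ j, mul_pos (hA i j) hj⟩

variable [Nonempty ι]

noncomputable def collatzWielandt (A : Matrix ι ι ℝ) (x : ι → ℝ) : ℝ :=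
  univ.inf' univ_nonempty fun i => (A *ᵥ x) i / x i

theorem collatzWielandt_smul (A : Matrix ι ι ℝ) (x : ι → ℝ) {c : ℝ} (hc : c ≠ 0) :
    collatzWielandt A (c • x) = collatzWielandt A x := by
  simp only [collatzWielandt, mulVec_smul, Pi.smul_apply, smul_eq_mul, mul_div_mul_left _ _ hc]

theorem collatzWielandt_mul_le (A : Matrix ι ι ℝ) {x : ι → ℝ} {i : ι} (hx : 0 < x i) :
    collatzWielandt A x * x i ≤ (A *ᵥ x) i :=
  (le_div_iff₀ hx).mp (inf'_le _ (mem_univ i))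

theorem lt_collatzWielandt_iff (A : Matrix ι ι ℝ) {x : ι → ℝ} (hx : ∀ i, 0 < x i) {r : ℝ} :
    r < collatzWielandt A x ↔ ∀ i, r * x i < (A *ᵥ x) i := by
  simp [collatzWielandt, lt_inf'_iff, lt_div_iff₀ (hx _)]

theorem lt_collatzWielandt_mulVec {A : Matrix ι ι ℝ} (hA : ∀ i j, 0 < A i j) {v : ι → ℝ}
    (hv : ∀ i, 0 < v i) {r : ℝ} (hrv : ∀ i, r * v i ≤ (A *ᵥ v) i) (hne : A *ᵥ v ≠ r • v) :
    r < collatzWielandt A (A *ᵥ v) := by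
  -- `A v - r v` is nonnegative and nonzero, so `A (A v - r v)` is strictly positive
  have hz : ∃ j, 0 < (A *ᵥ v - r • v) j := by
    by_contra! h
    exact hne (funext fun j => le_antisymm (by simpa [sub_nonpos] using h j) (hrv j))
  have hAz := mulVec_pos_of_pos hA (fun j => by simpa using hrv j) hz
  refine (lt_collatzWielandt_iff A (mulVec_pos_of_pos hA (fun j => (hv j).le)
    ⟨_, hv (Classical.arbitrary ι)⟩)).mpr fun i => ?_
  have := hAz i
  simp only [mulVec_sub, mulVec_smul, Pi.sub_apply, Pi.smul_apply, smul_eq_mul] at this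
  linarith

theorem exists_pos_eigenvector {A : Matrix ι ι ℝ} (hA : ∀ i j, 0 < A i j) :
    ∃ (r : ℝ) (v : ι → ℝ), 0 < r ∧ (∀ i, 0 < v i) ∧ A *ᵥ v = r • v := by
  have hApos : ∀ u ∈ stdSimplex ℝ ι, ∀ i, 0 < (A *ᵥ u) i := fun u hu =>
    mulVec_pos_of_pos hA hu.1 (by
      by_contra! h
      have := hu.2 ▸ sum_nonpos fun j _ => h j
      norm_num at this)
  have hcont : ContinuousOn (fun u => collatzWielandt A (A *ᵥ u)) (stdSimplex ℝ ι) := by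
    refine ContinuousOn.finset_inf'_apply _ fun i _ => ContinuousOn.div ?_ ?_
      fun u hu => (hApos u hu i).ne'
    · exact ((continuous_apply i).comp (continuous_const.matrix_mulVec
        (continuous_const.matrix_mulVec continuous_id))).continuousOn
    · exact ((continuous_apply i).comp
        (continuous_const.matrix_mulVec continuous_id)).continuousOn
  obtain ⟨u, hu, hmax⟩ := (isCompact_stdSimplex ℝ ι).exists_isMaxOn
    (isPathConnected_stdSimplex ι).nonempty hcont
  set v := A *ᵥ u
  have hv : ∀ i, 0 < v i := hApos u hu
  refine ⟨collatzWielandt A v, v, (lt_collatzWielandt_iff A hv).mpr fun i => by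
    simpa using mulVec_pos_of_pos hA (fun j => (hv j).le) ⟨i, hv i⟩ i, hv, ?_⟩
  by_contra hne
  have hlt := lt_collatzWielandt_mulVec hA hv (fun i => collatzWielandt_mul_le A (hv i)) hne
  set σ := ∑ j, v j
  have hσ : 0 < σ := sum_pos (fun j _ => hv j) univ_nonempty
  have hmem : σ⁻¹ • v ∈ stdSimplex ℝ ι :=
    ⟨fun j => by simpa using mul_nonneg (inv_nonneg.mpr hσ.le) (hv j).le,
      by simp [← mul_sum, σ, inv_mul_cancel₀ hσ.ne']⟩
  have := hmax hmem
  simp only [mulVec_smul, collatzWielandt_smul A _ (inv_ne_zero hσ.ne'), mem_ofPred_eq] at this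
  linarith

theorem exists_perron_pair {A : Matrix ι ι ℝ} (hA : ∀ i j, 0 < A i j) :
    ∃ (r : ℝ) (v w : ι → ℝ), 0 < r ∧ (∀ i, 0 < v i) ∧ (∀ i, 0 < w i) ∧
      A *ᵥ v = r • v ∧ w ᵥ* A = r • w ∧ w ⬝ᵥ v = 1 := by
  obtain ⟨r, v, hr, hv, hAv⟩ := exists_pos_eigenvector hA
  obtain ⟨s, u, -, hu, hAu⟩ := exists_pos_eigenvector (A := Aᵀ) fun i j => hA j i
  rw [mulVec_transpose] at hAu
  have huv : 0 < u ⬝ᵥ v := sum_pos (fun j _ => mul_pos (hu j) (hv j)) univ_nonempty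
  have hsr : s = r := by
    have h := dotProduct_mulVec u A v
    rw [hAv, hAu, dotProduct_smul, smul_dotProduct, smul_eq_mul, smul_eq_mul] at h
    exact (mul_right_cancel₀ huv.ne' h).symm
  refine ⟨r, v, (u ⬝ᵥ v)⁻¹ • u, hr, hv, fun i => mul_pos (inv_pos.mpr huv) (hu i), hAv, ?_, ?_⟩
  · rw [smul_vecMul, hAu, hsr, smul_comm]
  · rw [smul_dotProduct, smul_eq_mul, inv_mul_cancel₀ huv.ne']

end Perron

noncomputable def doobTransform (A : Matrix ι ι ℝ) (r : ℝ) (v : ι → ℝ) : Matrix ι ι ℝ :=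
  of fun i j => A i j * v j / (r * v i)

theorem sum_doobTransform_apply {A : Matrix ι ι ℝ} {r : ℝ} {v : ι → ℝ} (hr : r ≠ 0)
    (hv : ∀ i, v i ≠ 0) (hAv : A *ᵥ v = r • v) (i : ι) :
    ∑ j, doobTransform A r v i j = 1 := by
  have := congrFun hAv i
  simp only [mulVec, dotProduct, Pi.smul_apply, smul_eq_mul] at this
  simp only [doobTransform, of_apply, ← sum_div, this]
  exact div_self (mul_ne_zero hr (hv i))

theorem vecMul_doobTransform {A : Matrix ι ι ℝ} {r : ℝ} {v w : ι → ℝ} (hr : r ≠ 0)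
    (hv : ∀ i, v i ≠ 0) (hwA : w ᵥ* A = r • w) :
    (w * v) ᵥ* doobTransform A r v = w * v := by
  ext j
  have := congrFun hwA j
  simp only [vecMul, dotProduct, Pi.smul_apply, smul_eq_mul] at this
  simp only [vecMul, dotProduct, doobTransform, of_apply, Pi.mul_apply]
  calc ∑ i, w i * v i * (A i j * v j / (r * v i)) = (∑ i, w i * A i j) * v j / r := by
        rw [sum_mul, sum_div]
        exact sum_congr rfl fun i _ => by field_simp [hv i]
    _ = w j * v j := by rw [this]; field_simp

section PerronEstimate

variable [DecidableEq ι]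

theorem pow_doobTransform_mulVec {A : Matrix ι ι ℝ} {r : ℝ} {v : ι → ℝ} (hr : r ≠ 0)
    (hv : ∀ i, v i ≠ 0) (x : ι → ℝ) (k : ℕ) :
    doobTransform A r v ^ k *ᵥ (x / v) = (A ^ k *ᵥ x) / (r ^ k • v) := by
  induction k with
  | zero => simp
  | succ k ih =>
    rw [pow_succ', ← mulVec_mulVec, ih, pow_succ', ← mulVec_mulVec]
    generalize A ^ k *ᵥ x = y
    ext i
    simp only [mulVec, dotProduct, doobTransform, of_apply, Pi.div_apply, Pi.smul_apply,
      smul_eq_mul, sum_div]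
    refine sum_congr rfl fun j _ => ?_
    field_simp [hv i, hv j]
    ring

theorem exists_norm_pow_mulVec_sub_le [Nonempty ι] {A : Matrix ι ι ℝ}
    (hA : ∀ i j, 0 < A i j) :
    ∃ (r : ℝ) (v w : ι → ℝ) (C θ : ℝ), 0 < r ∧ (∀ i, 0 < v i) ∧ (∀ i, 0 < w i) ∧
      A *ᵥ v = r • v ∧ 0 ≤ C ∧ 0 < θ ∧ θ < 1 ∧
      ∀ x k, ‖(r ^ k)⁻¹ • (A ^ k *ᵥ x) - (w ⬝ᵥ x) • v‖ ≤ C * θ ^ k * ‖x‖ := by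
  obtain ⟨r, v, w, hr, hv, hw, hAv, hwA, hwv⟩ := exists_perron_pair hA
  have hv0 : ∀ i, v i ≠ 0 := fun i => (hv i).ne'
  obtain ⟨θ, hθ0, hθ1, hθ⟩ := exists_abs_pow_mulVec_sub_dotProduct_le
    (P := doobTransform A r v) (q := w * v)
    (fun i j => div_pos (mul_pos (hA i j) (hv j)) (mul_pos hr (hv i)))
    (sum_doobTransform_apply hr.ne' hv0 hAv) (fun j => (mul_pos (hw j) (hv j)).le)
    (by simpa [dotProduct] using hwv) (vecMul_doobTransform hr.ne' hv0 hwA)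
  obtain ⟨i₀, hi₀⟩ := Finite.exists_min v
  obtain ⟨i₁, hi₁⟩ := Finite.exists_max v
  have hv₀ := hv i₀
  have hv₁ := hv i₁
  refine ⟨r, v, w, 2 * v i₁ / v i₀, θ, hr, hv, hw, hAv, by positivity, hθ0, hθ1, fun x k => ?_⟩
  have hxv : ‖x / v‖ ≤ ‖x‖ / v i₀ := by
    refine pi_norm_le_iff_of_nonneg (by positivity) |>.mpr fun j => ?_
    rw [Pi.div_apply, norm_div, Real.norm_of_nonneg (hv j).le]
    exact div_le_div₀ (norm_nonneg _) (norm_le_pi_norm x j) (hv i₀) (hi₀ j)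
  refine pi_norm_le_iff_of_nonneg (by positivity) |>.mpr fun i => ?_
  have hi := hθ (x / v) k i
  rw [pow_doobTransform_mulVec hr.ne' hv0, show (w * v) ⬝ᵥ (x / v) = w ⬝ᵥ x by
    simp [dotProduct, mul_assoc, mul_div_cancel₀ _ (hv0 _)]] at hi
  simp only [Pi.div_apply, Pi.smul_apply, smul_eq_mul] at hi
  calc ‖((r ^ k)⁻¹ • (A ^ k *ᵥ x) - (w ⬝ᵥ x) • v) i‖
      = v i * |(A ^ k *ᵥ x) i / (r ^ k * v i) - w ⬝ᵥ x| := by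
        simp only [Pi.sub_apply, Pi.smul_apply, smul_eq_mul, Real.norm_eq_abs]
        rw [← abs_of_pos (hv i), ← abs_mul, abs_of_pos (hv i)]
        congr 1
        field_simp [hv0 i]
    _ ≤ v i₁ * (θ ^ k * (2 * (‖x‖ / v i₀))) :=
        mul_le_mul (hi₁ i) (hi.trans (by gcongr)) (abs_nonneg _) hv₁.le
    _ = 2 * v i₁ / v i₀ * θ ^ k * ‖x‖ := by ring

theorem eq_smul_of_mulVec_eq_smul {A : Matrix ι ι ℝ} {r C θ : ℝ} {v w : ι → ℝ} (hr : r ≠ 0)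
    (hθ0 : 0 ≤ θ) (hθ1 : θ < 1)
    (hest : ∀ x k, ‖(r ^ k)⁻¹ • (A ^ k *ᵥ x) - (w ⬝ᵥ x) • v‖ ≤ C * θ ^ k * ‖x‖)
    {u : ι → ℝ} (hu : A *ᵥ u = r • u) : u = (w ⬝ᵥ u) • v := by
  have hpow : ∀ k : ℕ, A ^ k *ᵥ u = r ^ k • u := by
    intro k
    induction k with
    | zero => simp
    | succ k ih => rw [pow_succ, ← mulVec_mulVec, hu, mulVec_smul, ih, smul_smul, pow_succ']
  have hle : ∀ k : ℕ, ‖u - (w ⬝ᵥ u) • v‖ ≤ C * θ ^ k * ‖u‖ := fun k => by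
    simpa [hpow, smul_smul, hr] using hest u k
  have hlim : Tendsto (fun k : ℕ => C * θ ^ k * ‖u‖) atTop (nhds 0) := by
    simpa using ((tendsto_pow_atTop_nhds_zero_of_lt_one hθ0 hθ1).const_mul C).mul_const ‖u‖
  exact sub_eq_zero.mp (norm_le_zero_iff.mp (ge_of_tendsto' hlim hle))

theorem norm_exp_smul_mulVec_sub_le {M : Matrix ι ι ℝ} {ρ C K ε : ℝ} {v w : ι → ℝ}
    (hv : M *ᵥ v = ρ • v) (hC : 0 ≤ C) (hK0 : 0 ≤ K) (hε : 0 ≤ ε)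
    (hest : ∀ x k, ‖(Real.exp ρ ^ k)⁻¹ • (exp M ^ k *ᵥ x) - (w ⬝ᵥ x) • v‖ ≤
      C * Real.exp (-ε) ^ k * ‖x‖)
    (hK : ∀ s ∈ Icc (0 : ℝ) 1, ∀ y, ‖exp (s • M) *ᵥ y‖ ≤ K * ‖y‖) (x : ι → ℝ) {t : ℝ}
    (ht : 0 ≤ t) :
    ‖Real.exp (-ρ * t) • (exp (t • M) *ᵥ x) - (w ⬝ᵥ x) • v‖ ≤
      C * K * Real.exp |ρ| * Real.exp ε * Real.exp (-ε * t) * ‖x‖ := by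
  set k := ⌊t⌋₊
  set s := t - k
  have hs : s ∈ Icc (0 : ℝ) 1 := ⟨sub_nonneg.mpr (Nat.floor_le ht),
    by linarith [Nat.lt_floor_add_one t]⟩
  have hsplit : exp (t • M) = exp (s • M) * exp M ^ k := by
    rw [← Matrix.exp_nsmul, ← Nat.cast_smul_eq_nsmul ℝ, ← Matrix.exp_add_of_commute _ _
      (((Commute.refl M).smul_left s).smul_right _), ← add_smul, sub_add_cancel]
  have hvs : exp (s • M) *ᵥ v = Real.exp (s * ρ) • v :=
    exp_mulVec_of_mulVec_eq_smul (by rw [smul_mulVec, hv, smul_smul])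
  set z := (Real.exp ρ ^ k)⁻¹ • (exp M ^ k *ᵥ x) - (w ⬝ᵥ x) • v
  -- `v` is an eigenvector of `exp (s • M)`, so the error at time `t` is the error at the
  -- integer time `k` propagated over the remaining time `s`
  have hkey : Real.exp (-ρ * t) • (exp (t • M) *ᵥ x) - (w ⬝ᵥ x) • v =
      Real.exp (-ρ * s) • (exp (s • M) *ᵥ z) := by
    have h1 : Real.exp (-ρ * t) = Real.exp (-ρ * s) * (Real.exp ρ ^ k)⁻¹ := by
      rw [← Real.exp_nat_mul, ← Real.exp_neg, ← Real.exp_add]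
      congr 1
      simp only [s]
      ring
    have h2 : Real.exp (-ρ * s) * Real.exp (s * ρ) = 1 := by
      rw [← Real.exp_add]; ring_nf; exact Real.exp_zero
    rw [hsplit, ← mulVec_mulVec, mulVec_sub, mulVec_smul, mulVec_smul, hvs, smul_sub, smul_smul,
      smul_smul, smul_smul, ← h1, mul_right_comm, h2, one_mul]
  have hk : Real.exp (-ε) ^ k ≤ Real.exp ε * Real.exp (-ε * t) := by
    rw [← Real.exp_nat_mul, ← Real.exp_add]
    exact Real.exp_le_exp.mpr (by nlinarith [Nat.lt_floor_add_one t])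
  rw [hkey, norm_smul, Real.norm_of_nonneg (Real.exp_pos _).le]
  calc Real.exp (-ρ * s) * ‖exp (s • M) *ᵥ z‖
      ≤ Real.exp |ρ| * (K * (C * Real.exp (-ε) ^ k * ‖x‖)) := by
        gcongr
        · nlinarith [neg_abs_le ρ, le_abs_self ρ, hs.1, hs.2]
        · exact (hK s hs z).trans (by gcongr; exact hest x k)
    _ ≤ Real.exp |ρ| * (K * (C * (Real.exp ε * Real.exp (-ε * t)) * ‖x‖)) := by gcongr
    _ = C * K * Real.exp |ρ| * Real.exp ε * Real.exp (-ε * t) * ‖x‖ := by ring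

end PerronEstimate

end Matrix

open Matrix

/-- **The Perron–Frobenius theorem for matrix semigroups (continuous version).**
Let `Q` be a real `n×n` matrix with nonnegative off-diagonal entries (P) which is
irreducible (I): for all `i, j` there is a chain `i = i₁, …, i_m = j` with
`Q i_k i_{k+1} > 0`.  Then there are `r ∈ ℝ`, strictly positive vectors `x*, y* ∈ ℝⁿ` and
constants `C ≥ 0`, `ε > 0` such that
`‖e^{−rt}·(x e^{tQ}) − ⟨y*,x⟩ x*‖ ≤ C e^{−εt} ‖x‖` for all `x ∈ ℝⁿ` and `t ≥ 0`;
in particular `e^{−rt} x e^{tQ} → ⟨y*,x⟩ x*` exponentially fast. -/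
theorem perron_frobenius_matrix_semigroup
    {n : ℕ} (Q : Matrix (Fin n) (Fin n) ℝ)
    (hP : ∀ i j : Fin n, i ≠ j → 0 ≤ Q i j)
    (hI : ∀ i j : Fin n, ∃ (k : ℕ) (c : Fin (k + 1) → Fin n),
      c 0 = i ∧ c (Fin.last k) = j ∧
      ∀ l : Fin k, 0 < Q (c l.castSucc) (c l.succ)) :
    ∃ (r : ℝ) (xstar ystar : Fin n → ℝ) (C ε : ℝ),
      (∀ i, 0 < xstar i) ∧ (∀ i, 0 < ystar i) ∧ 0 ≤ C ∧ 0 < ε ∧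
      ∀ (x : Fin n → ℝ) (t : ℝ), 0 ≤ t →
        ‖Real.exp (-r * t) • (x ᵥ* NormedSpace.exp (t • Q)) - (ystar ⬝ᵥ x) • xstar‖ ≤
          C * Real.exp (-ε * t) * ‖x‖ := by
  rcases isEmpty_or_nonempty (Fin n) with hn | hn
  · exact ⟨0, 0, 0, 0, 1, isEmptyElim, isEmptyElim, le_rfl, one_pos, fun x t _ => by
      simp [Subsingleton.elim _ (0 : Fin n → ℝ)]⟩
  have hA : ∀ i j, 0 < exp Qᵀ i j := fun i j => by
    rw [exp_transpose]; exact exp_apply_pos hP hI j i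
  obtain ⟨r, v, w, C, θ, hr, hv, hw, hAv, hC, hθ0, hθ1, hest⟩ := exists_norm_pow_mulVec_sub_le hA
  obtain ⟨ρ, hρ⟩ : ∃ ρ, Qᵀ *ᵥ v = ρ • v :=
    ⟨_, eq_smul_of_mulVec_eq_smul hr.ne' hθ0.le hθ1 hest (by
      rw [mulVec_mulVec, ((Commute.refl Qᵀ).exp_left).eq, ← mulVec_mulVec, hAv, mulVec_smul])⟩
  obtain rfl : r = Real.exp ρ := smul_left_injective ℝ (fun h => (hv hn.some).ne' (congrFun h _))
    ((exp_mulVec_of_mulVec_eq_smul hρ).symm.trans hAv).symm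
  obtain ⟨K, hK0, hK⟩ := exists_bound_exp_smul_mulVec Qᵀ
  have hε : 0 < -Real.log θ := neg_pos.mpr (Real.log_neg hθ0 hθ1)
  rw [← Real.exp_log hθ0, ← neg_neg (Real.log θ)] at hest
  refine ⟨ρ, v, w, C * K * Real.exp |ρ| * Real.exp (-Real.log θ), -Real.log θ, hv, hw,
    by positivity, hε, fun x t ht => ?_⟩
  rw [← mulVec_transpose, ← exp_transpose, transpose_smul]
  exact norm_exp_smul_mulVec_sub_le hρ hC hK0 hε.le hest hK x ht
end

section
/- Let m be Lebesgue measure on [0,1] and define P : L¹([0,1]) → L¹([0,1]) by Pf(x) = 2f(2x) for x ∈ [0,1/2] and Pf(x) = 0 for x ∈ (1/2,1]. Then P is a stochastic operator, so the bounded operator A = I − P satisfies ∫₀¹ Af dm = 0 for every f ∈ L¹([0,1]); nevertheless the semigroup T(t) = e^{tA} is not positive. Specifically, for f = 1_{(1/2,1]} one has Pᵏf = 2ᵏ 1_{(2^{−k−1}, 2^{−k}]} for every k ≥ 0, hence T(t)f = e^{t}·((−t)ᵏ 2ᵏ/k!) a.e. on (2^{−k−1}, 2^{−k}], which is strictly negative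 for every t > 0 and every odd k; in particular for each t > 0 the function T(t)f is negative on a set of positive Lebesgue measure. -/
/-!
`P` is the transfer operator of the contraction `x ↦ x / 2` of `[0, 1]`, hence stochastic. It
maps `2ᵏ 𝟙_{J k}` to `2ᵏ⁺¹ 𝟙_{J (k+1)}`, where the intervals `J k = (2⁻ᵏ⁻¹, 2⁻ᵏ]` are pairwise
disjoint, so the terms `(-t)ⁿ/n! · Pⁿ f` of the series for `e^{-tP} f` have disjoint supports.
A subsequence of the partial sums converges a.e., so the `L¹` sum agrees a.e. with the pointwise
sum, which on `J k` is the single term `(-t)ᵏ 2ᵏ / k!`. As `e^{t(I - P)} = eᵗ e^{-tP}`, the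
function `T(t) f` is negative on `J k` for odd `k`.
-/

open MeasureTheory Filter

open Set Function
open scoped ENNReal Nat

namespace MeasureTheory.Lp

variable {α E : Type*} [MeasurableSpace α] {μ : Measure α} [NormedAddCommGroup E] {p : ℝ≥0∞}

theorem coeFn_finset_sum {ι : Type*} (f : ι → Lp E p μ) (s : Finset ι) :
    ⇑(∑ i ∈ s, f i) =ᵐ[μ] ∑ i ∈ s, ⇑(f i) := by
  classical
  induction s using Finset.induction with
  | empty => simpa using Lp.coeFn_zero E p μ
  | insert a s ha ih =>
    simp only [Finset.sum_insert ha]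
    exact (Lp.coeFn_add _ _).trans (EventuallyEq.rfl.add ih)

theorem ae_eq_tsum_of_hasSum [Fact (1 ≤ p)] {g : ℕ → Lp E p μ} {S : Lp E p μ} (hS : HasSum g S)
    (hg : ∀ᵐ x ∂μ, Summable fun n => g n x) : S =ᵐ[μ] fun x => ∑' n, g n x := by
  obtain ⟨ns, hns, hae⟩ :=
    (tendstoInMeasure_of_tendsto_Lp hS.tendsto_sum_nat).exists_seq_tendsto_ae
  filter_upwards [hae, hg, ae_all_iff.2 fun N => coeFn_finset_sum g (Finset.range N)]
    with x hlim hsum hcoe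
  refine tendsto_nhds_unique hlim ?_
  simp only [hcoe, Finset.sum_apply]
  exact hsum.hasSum.tendsto_sum_nat.comp hns.tendsto_atTop

end MeasureTheory.Lp

theorem NormedSpace.exp_smul_one_sub {𝔸 : Type*} [NormedRing 𝔸] [NormedAlgebra ℝ 𝔸]
    [CompleteSpace 𝔸] (t : ℝ) (a : 𝔸) :
    NormedSpace.exp (t • (1 - a)) = Real.exp t • NormedSpace.exp ((-t) • a) := by
  have h_mem (x : 𝔸) : x ∈ Metric.eball (0 : 𝔸) (expSeries ℝ 𝔸).radius :=
    (expSeries_radius_eq_top ℝ 𝔸).symm ▸ edist_lt_top _ _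
  rw [smul_sub, sub_eq_add_neg, ← neg_smul, ← Algebra.algebraMap_eq_smul_one,
    exp_add_of_commute_of_mem_ball (Algebra.commutes t _) (h_mem _) (h_mem _),
    ← algebraMap_exp_comm, ← Real.exp_eq_exp_ℝ]
  exact (Algebra.smul_def _ _).symm

theorem hasSum_indicator_of_mem {α M : Type*} [AddCommMonoid M] [TopologicalSpace M]
    {s : ℕ → Set α} (hs : Pairwise (Disjoint on s)) (f : ℕ → α → M) {k : ℕ} {x : α}
    (hx : x ∈ s k) : HasSum (fun n => (s n).indicator (f n) x) (f k x) := by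
  rw [← indicator_of_mem hx (f k)]
  exact hasSum_single k fun _ hn =>
    indicator_of_notMem (fun hxn => (hs hn).ne_of_mem hxn hx rfl) _

theorem summable_indicator_of_pairwise_disjoint {α M : Type*} [AddCommMonoid M]
    [TopologicalSpace M] {s : ℕ → Set α} (hs : Pairwise (Disjoint on s)) (f : ℕ → α → M) (x : α) :
    Summable fun n => (s n).indicator (f n) x := by
  by_cases hx : ∃ k, x ∈ s k
  · obtain ⟨k, hk⟩ := hx
    exact (hasSum_indicator_of_mem hs f hk).summable
  · rw [not_exists] at hx
    simp only [indicator_of_notMem (hx _)]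
    exact summable_zero

theorem IsStochasticOperator.integral_one_sub_apply {X : Type*} [MeasurableSpace X]
    {m : Measure X} {P : Lp ℝ 1 m →L[ℝ] Lp ℝ 1 m} (hP : IsStochasticOperator m P)
    (f : Lp ℝ 1 m) : ∫ x, (((1 : Lp ℝ 1 m →L[ℝ] Lp ℝ 1 m) - P) f : X → ℝ) x ∂m = 0 := by
  rw [sub_apply, one_apply_eq_self, integral_congr_ae (Lp.coeFn_sub _ _),
    integral_sub' (L1.integrable_coeFn f) (L1.integrable_coeFn (P f)), hP.2 f, sub_self]

theorem exp_mul_neg_pow_mul_div_factorial_neg {t : ℝ} (ht : 0 < t) {k : ℕ} (hk : Odd k) :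
    Real.exp t * ((-t) ^ k * 2 ^ k / k !) < 0 := by
  rw [hk.neg_pow, neg_mul]
  exact mul_neg_of_pos_of_neg (Real.exp_pos t)
    (div_neg_of_neg_of_pos (neg_neg_of_pos (by positivity)) (by positivity))

/-- The transfer operator of `x ↦ x / 2` on `[0, 1]`, acting on representatives. -/
noncomputable def halvingTransfer (g : ℝ → ℝ) (x : ℝ) : ℝ :=
  if x ≤ 1/2 then 2 * g (2 * x) else 0

def dyadicInterval (n : ℕ) : Set ℝ := Ioc ((2 ^ (n + 1))⁻¹) ((2 ^ n)⁻¹)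

theorem pairwise_disjoint_dyadicInterval : Pairwise (Disjoint on dyadicInterval) :=
  Antitone.pairwise_disjoint_on_Ioc_succ (f := fun n : ℕ => ((2 : ℝ) ^ n)⁻¹) fun _ _ h =>
    inv_anti₀ (by positivity) (pow_le_pow_right₀ one_le_two h)

theorem two_mul_mem_dyadicInterval_iff {x : ℝ} {k : ℕ} :
    2 * x ∈ dyadicInterval k ↔ x ∈ dyadicInterval (k + 1) := by
  simp only [dyadicInterval, mem_Ioc, pow_succ, mul_inv]
  constructor <;> rintro ⟨h₁, h₂⟩ <;> constructor <;> linarith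

theorem dyadicInterval_succ_subset_Iic (k : ℕ) : dyadicInterval (k + 1) ⊆ Iic (1/2) :=
  fun _ hx => hx.2.trans <| by
    rw [one_div]; exact inv_anti₀ two_pos (le_self_pow₀ one_le_two (by omega))

theorem halvingTransfer_indicator_dyadicInterval (k : ℕ) :
    halvingTransfer ((dyadicInterval k).indicator fun _ => 2 ^ k) =
      (dyadicInterval (k + 1)).indicator fun _ => 2 ^ (k + 1) := by
  ext x
  by_cases hx : x ∈ dyadicInterval (k + 1)
  · rw [halvingTransfer, if_pos (show x ≤ 1/2 from dyadicInterval_succ_subset_Iic k hx),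
      indicator_of_mem (two_mul_mem_dyadicInterval_iff.2 hx), indicator_of_mem hx, pow_succ,
      mul_comm]
  · rw [indicator_of_notMem hx, halvingTransfer]
    split_ifs
    · rw [indicator_of_notMem (mt two_mul_mem_dyadicInterval_iff.1 hx), mul_zero]
    · rfl

theorem volume_restrict_Icc_dyadicInterval_pos (n : ℕ) :
    0 < volume.restrict (Icc (0 : ℝ) 1) (dyadicInterval n) := by
  have h_sub : dyadicInterval n ⊆ Icc 0 1 := fun _ hx =>
    ⟨(inv_pos.2 (by positivity)).le.trans hx.1.le,
      hx.2.trans (inv_le_one_of_one_le₀ (one_le_pow₀ one_le_two))⟩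
  rw [Measure.restrict_apply (by exact measurableSet_Ioc), inter_eq_left.2 h_sub, dyadicInterval,
    Real.volume_Ioc, ENNReal.ofReal_pos, sub_pos]
  exact inv_strictAnti₀ (by positivity) (pow_lt_pow_right₀ one_lt_two (Nat.lt_succ_self n))

local notation "μ₀" => volume.restrict (Icc (0 : ℝ) 1)

theorem ae_restrict_Icc_two_mul {Q : ℝ → Prop} (h : ∀ᵐ x ∂μ₀, Q x) :
    ∀ᵐ x ∂μ₀, x ≤ 1/2 → Q (2 * x) := by
  have h_pre := (Measure.quasiMeasurePreserving_smul volume two_ne_zero).ae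
    ((ae_restrict_iff' measurableSet_Icc).1 h)
  filter_upwards [ae_restrict_of_ae h_pre, ae_restrict_mem measurableSet_Icc] with x hx hx01 hle
  rw [smul_eq_mul] at hx
  exact hx ⟨by linarith [hx01.1], by linarith⟩

theorem halvingTransfer_congr_ae {g h : ℝ → ℝ} (hgh : g =ᵐ[μ₀] h) :
    halvingTransfer g =ᵐ[μ₀] halvingTransfer h := by
  filter_upwards [ae_restrict_Icc_two_mul hgh] with x hx
  unfold halvingTransfer
  split_ifs with hle
  · rw [hx hle]
  · rfl

theorem halvingTransfer_nonneg_ae {g : ℝ → ℝ} (hg : 0 ≤ᵐ[μ₀] g) :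
    0 ≤ᵐ[μ₀] halvingTransfer g := by
  filter_upwards [ae_restrict_Icc_two_mul hg] with x hx
  unfold halvingTransfer
  split_ifs with hle
  · exact mul_nonneg zero_le_two (hx hle)
  · rfl

theorem integral_halvingTransfer (g : ℝ → ℝ) :
    ∫ x, halvingTransfer g x ∂μ₀ = ∫ x, g x ∂μ₀ := by
  have h_ind : halvingTransfer g = (Iic (1/2)).indicator fun x => 2 * g (2 * x) := by
    ext x; simp only [halvingTransfer, indicator_apply, mem_Iic]
  have h_inter : Icc (0 : ℝ) 1 ∩ Iic (1/2) = Icc 0 (1/2) := by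
    ext x
    simp only [mem_inter_iff, mem_Icc, mem_Iic]
    constructor
    · rintro ⟨⟨h₀, -⟩, h⟩; exact ⟨h₀, h⟩
    · rintro ⟨h₀, h⟩; exact ⟨⟨h₀, by linarith⟩, h⟩
  rw [h_ind, setIntegral_indicator measurableSet_Iic, h_inter, integral_const_mul,
    integral_Icc_eq_integral_Ioc, integral_Icc_eq_integral_Ioc,
    ← intervalIntegral.integral_of_le (by norm_num : (0:ℝ) ≤ 1/2),
    ← intervalIntegral.integral_of_le zero_le_one,
    intervalIntegral.integral_comp_mul_left g two_ne_zero]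
  norm_num [← mul_assoc]

section

variable {P : Lp ℝ 1 μ₀ →L[ℝ] Lp ℝ 1 μ₀}

theorem isStochasticOperator_of_ae_eq_halvingTransfer
    (hP : ∀ f : Lp ℝ 1 μ₀, ⇑(P f) =ᵐ[μ₀] halvingTransfer f) : IsStochasticOperator μ₀ P :=
  ⟨fun f hf => (Lp.coeFn_nonneg _).1
      ((halvingTransfer_nonneg_ae ((Lp.coeFn_nonneg f).2 hf)).trans_eq (hP f).symm),
    fun f => (integral_congr_ae (hP f)).trans (integral_halvingTransfer f)⟩

theorem pow_apply_ae_eq_indicator_dyadicInterval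
    (hP : ∀ f : Lp ℝ 1 μ₀, ⇑(P f) =ᵐ[μ₀] halvingTransfer f) {f : Lp ℝ 1 μ₀}
    (hf : ⇑f =ᵐ[μ₀] (Ioc (1/2 : ℝ) 1).indicator fun _ => 1) (k : ℕ) :
    ⇑((P ^ k) f) =ᵐ[μ₀] (dyadicInterval k).indicator fun _ => 2 ^ k := by
  induction k with
  | zero => exact hf.trans (by norm_num [dyadicInterval])
  | succ k ih =>
    rw [pow_succ', mul_apply_eq_comp]
    exact (hP _).trans ((halvingTransfer_congr_ae ih).trans
      (halvingTransfer_indicator_dyadicInterval k).eventuallyEq)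

end

theorem exp_smul_one_sub_apply_ae_eq {μ : Measure ℝ} (P : Lp ℝ 1 μ →L[ℝ] Lp ℝ 1 μ)
    {f : Lp ℝ 1 μ}
    (hPf : ∀ k : ℕ, ⇑((P ^ k) f) =ᵐ[μ] (dyadicInterval k).indicator fun _ => 2 ^ k) (t : ℝ) (k : ℕ) :
    ∀ᵐ x ∂μ, x ∈ dyadicInterval k →
      (NormedSpace.exp (t • (1 - P)) f : ℝ → ℝ) x = Real.exp t * ((-t) ^ k * 2 ^ k / k !) := by
  set a : ℕ → ℝ := fun n => (n ! : ℝ)⁻¹ * (-t) ^ n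
  have h_series : HasSum (fun n => a n • (P ^ n) f) (NormedSpace.exp ((-t) • P) f) := by
    refine ((NormedSpace.exp_series_hasSum_exp' (𝕂 := ℝ) ((-t) • P)).mapL
      (ContinuousLinearMap.apply ℝ _ f)).congr_fun fun n => ?_
    simp only [a, ContinuousLinearMap.apply_apply, smul_apply, smul_pow, mul_smul]
  have h_term (n : ℕ) :
      ⇑(a n • (P ^ n) f) =ᵐ[μ] (dyadicInterval n).indicator fun _ => a n * 2 ^ n := by
    filter_upwards [Lp.coeFn_smul (a n) ((P ^ n) f), hPf n] with x h₁ h₂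
    rw [h₁, Pi.smul_apply, h₂, smul_eq_mul]
    exact (indicator_const_mul _ _ _ _).symm
  have h_sum := Lp.ae_eq_tsum_of_hasSum h_series (by
    filter_upwards [ae_all_iff.2 h_term] with x hx
    simpa only [hx] using
      summable_indicator_of_pairwise_disjoint pairwise_disjoint_dyadicInterval _ x)
  filter_upwards [Lp.coeFn_smul (Real.exp t) (NormedSpace.exp ((-t) • P) f), h_sum,
    ae_all_iff.2 h_term] with x h_smul h_tsum h_terms hx
  rw [NormedSpace.exp_smul_one_sub, smul_apply, h_smul, Pi.smul_apply, h_tsum, smul_eq_mul,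
    tsum_congr h_terms, (hasSum_indicator_of_mem pairwise_disjoint_dyadicInterval _ hx).tsum_eq]
  simp only [a]
  field_simp

/-- **A generator satisfying `∫ Af dm = 0` need not generate a positive semigroup.**
On `L¹([0,1])` let `Pf(x) = 2f(2x)` for `x ∈ [0,1/2]` and `Pf(x) = 0` otherwise.  Then `P`
is a stochastic operator, so `A = I − P` satisfies `∫ Af dm = 0` for every `f`; nevertheless
the semigroup `T(t) = e^{tA}` is not positive: for `f = 1_{(1/2,1]}` one has
`Pᵏf = 2ᵏ 1_{(2^{−k−1},2^{−k}]}`, hence `T(t)f = e^t·(−t)ᵏ2ᵏ/k!` a.e. on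
`(2^{−k−1},2^{−k}]`, which is `< 0` for `t > 0` and odd `k`; in particular `T(t)f < 0` on a
set of positive measure for each `t > 0`. -/
theorem exp_of_integral_preserving_generator_not_positive
    (μ : Measure ℝ) (hμ : μ = volume.restrict (Set.Icc (0:ℝ) 1))
    (P : Lp ℝ 1 μ →L[ℝ] Lp ℝ 1 μ)
    (hP : ∀ f : Lp ℝ 1 μ, ∀ᵐ x ∂μ,
      (P f : ℝ → ℝ) x = if x ≤ 1/2 then 2 * (f : ℝ → ℝ) (2 * x) else 0)
    (fInd : Lp ℝ 1 μ)
    (hfInd : (fInd : ℝ → ℝ) =ᵐ[μ] Set.indicator (Set.Ioc (1/2 : ℝ) 1) (fun _ => (1:ℝ))) :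
    IsStochasticOperator μ P ∧
    (∀ f : Lp ℝ 1 μ, ∫ x, (((1 : Lp ℝ 1 μ →L[ℝ] Lp ℝ 1 μ) - P) f : ℝ → ℝ) x ∂μ = 0) ∧
    (∀ k : ℕ, ((P ^ k) fInd : ℝ → ℝ) =ᵐ[μ]
      Set.indicator (Set.Ioc (((2:ℝ) ^ (k+1))⁻¹) (((2:ℝ) ^ k)⁻¹)) (fun _ => (2:ℝ) ^ k)) ∧
    (∀ t : ℝ, 0 < t → ∀ k : ℕ,
      (∀ᵐ x ∂μ, x ∈ Set.Ioc (((2:ℝ) ^ (k+1))⁻¹) (((2:ℝ) ^ k)⁻¹) →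
        ((NormedSpace.exp (t • ((1 : Lp ℝ 1 μ →L[ℝ] Lp ℝ 1 μ) - P))) fInd : ℝ → ℝ) x =
          Real.exp t * ((-t) ^ k * 2 ^ k / (Nat.factorial k : ℝ))) ∧
      (Odd k → Real.exp t * ((-t) ^ k * 2 ^ k / (Nat.factorial k : ℝ)) < 0)) ∧
    (∀ t : ℝ, 0 < t →
      0 < μ {x : ℝ |
        ((NormedSpace.exp (t • ((1 : Lp ℝ 1 μ →L[ℝ] Lp ℝ 1 μ) - P))) fInd : ℝ → ℝ) x < 0}) := by
  subst hμ
  have h_stoch := isStochasticOperator_of_ae_eq_halvingTransfer hP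
  have h_pow := pow_apply_ae_eq_indicator_dyadicInterval hP hfInd
  have h_exp := exp_smul_one_sub_apply_ae_eq P h_pow
  refine ⟨h_stoch, h_stoch.integral_one_sub_apply, h_pow,
    fun t ht k => ⟨h_exp t k, exp_mul_neg_pow_mul_div_factorial_neg ht⟩, fun t ht => ?_⟩
  refine (volume_restrict_Icc_dyadicInterval_pos 1).trans_le (measure_mono_ae ?_)
  filter_upwards [h_exp t 1] with x hx hx₁
  exact (hx hx₁).trans_lt (exp_mul_neg_pow_mul_div_factorial_neg ht odd_one)
end

section
/- Let b, d, λ > 0. Suppose (x_i)_{i≥0} is a sequence of nonnegative real numbers satisfying d·i·x_{i−1} − (b + d·i)·x_i + b·x_{i+1} = λ·x_i for all i ≥ 0 (with the convention x_{−1} = 0). Then the sequence is nondecreasing and satisfies x_{i+1} ≥ (1 + λ/b)·x_i for all i ≥ 0; consequently, if the sequence is not identically zero it is unbounded. In particular, the equation Qx = λx, where Q is the birth–death intensity matrix with q_{i,i+1} = b, q_{i,i−1} = d·i, q_{ii} = −(b + d·i), has no nonzero nonnegative solution x ∈ ℓ^∞, so the associated minimal semigroup of the erythrocyte population model is stochastic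 (non-explosive). -/
/-- **Non-explosiveness of the erythrocyte birth–death model.**
Let `b, d, λ > 0` and let `(x_i)` be a sequence of nonnegative reals satisfying
`d·i·x_{i−1} − (b + d·i)·x_i + b·x_{i+1} = λ·x_i` for all `i ≥ 0` (with `x_{−1} = 0`).
Then `(x_i)` is nondecreasing and `x_{i+1} ≥ (1 + λ/b)·x_i` for all `i`; consequently, if
it is not identically zero it is unbounded.  Hence `Qx = λx` has no nonzero nonnegative
solution in `ℓ^∞` and the minimal semigroup of the model is stochastic. -/
theorem erythrocyte_recurrence_unbounded
    (b d lam : ℝ) (hb : 0 < b) (hd : 0 < d) (hlam : 0 < lam)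
    (x : ℕ → ℝ) (hx_nonneg : ∀ i, 0 ≤ x i)
    (hrec : ∀ i : ℕ,
      d * (i : ℝ) * (if i = 0 then 0 else x (i - 1)) - (b + d * (i : ℝ)) * x i
        + b * x (i + 1) = lam * x i) :
    Monotone x ∧
    (∀ i : ℕ, (1 + lam / b) * x i ≤ x (i + 1)) ∧
    ((∃ i, x i ≠ 0) → ¬ BddAbove (Set.range x)) := by
  have hb' : b ≠ 0 := ne_of_gt hb
  have key : ∀ i : ℕ, x i ≤ x (i + 1) ∧ (1 + lam / b) * x i ≤ x (i + 1) := by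
    intro i
    induction i with
    | zero =>
      have h0 := hrec 0
      simp at h0
      have hx1 : x 1 = (1 + lam / b) * x 0 := by
        field_simp at h0 ⊢
        linarith
      constructor
      · rw [hx1]
        nlinarith [hx_nonneg 0, div_pos hlam hb]
      · rw [hx1]
    | succ n ih =>
      have h := hrec (n + 1)
      simp only [Nat.add_sub_cancel, if_neg (Nat.succ_ne_zero n)] at h
      have hdn : 0 ≤ d * ((n : ℝ) + 1) := by positivity
      have hmono : x n ≤ x (n + 1) := ih.1
      have hxn : 0 ≤ x (n + 1) := hx_nonneg (n + 1)
      have hstep : (1 + lam / b) * x (n + 1) ≤ x (n + 2) := by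
        have hb2 : b * ((1 + lam / b) * x (n + 1)) = (b + lam) * x (n + 1) := by
          field_simp
        have hge : b * x (n + 2) ≥ (b + lam) * x (n + 1) := by
          push_cast at h
          nlinarith
        exact le_of_mul_le_mul_left (by linarith [hb2]) hb
      refine ⟨?_, hstep⟩
      have h1 : (1 : ℝ) ≤ 1 + lam / b := by
        have := div_pos hlam hb; linarith
      calc x (n + 1) = 1 * x (n + 1) := by ring
        _ ≤ (1 + lam / b) * x (n + 1) := by nlinarith
        _ ≤ x (n + 2) := hstep
  refine ⟨monotone_nat_of_le_succ fun i => (key i).1, fun i => (key i).2, ?_⟩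
  rintro ⟨i, hi⟩ ⟨M, hM⟩
  have hxi : 0 < x i := lt_of_le_of_ne (hx_nonneg i) (Ne.symm hi)
  have hr : (1 : ℝ) < 1 + lam / b := by
    have := div_pos hlam hb; linarith
  have hgrow : ∀ n : ℕ, (1 + lam / b) ^ n * x i ≤ x (i + n) := by
    intro n
    induction n with
    | zero => simp
    | succ k ihk =>
      calc (1 + lam / b) ^ (k + 1) * x i
          = (1 + lam / b) * ((1 + lam / b) ^ k * x i) := by ring
        _ ≤ (1 + lam / b) * x (i + k) := by
            have := le_of_lt hr; nlinarith
        _ ≤ x (i + k + 1) := (key (i + k)).2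
  obtain ⟨n, hn⟩ := pow_unbounded_of_one_lt (M / x i) hr
  have hMn : x (i + n) ≤ M := hM ⟨i + n, rfl⟩
  have : M / x i * x i < (1 + lam / b) ^ n * x i := by
    exact mul_lt_mul_of_pos_right hn hxi
  rw [div_mul_cancel₀ _ (ne_of_gt hxi)] at this
  linarith [hgrow n]
end
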